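/- If σ_∃ is a strongly winning strategy for L, then EA(σ_∃) = L ∪ ((Σ_I·Σ_O)^ω \ Out(σ_∃)) is an optimal assumption for L, i.e., EA(σ_∃) is sufficient for L and no assumption sufficient for L strictly contains it. -/
import Mathlib


open scoped Classical

universe u v

variable {I : Type u} {O : Type v}

/-- The finite (even) history consisting of the first `n` (input, output) pairs of a word.
A word in `(Σ_I · Σ_O)^ω` is modelled as `w : ℕ → I × O`, where round `n` consists of the
input letter `(w n).1` followed by the output letter `(w n).2`. -/
def wpref (w : ℕ → I × O) (n : ℕ) : List (I × O) := (List.range n).map w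

/-- Outcomes of a controller strategy `σ : (Σ_I·Σ_O)^*·Σ_I → Σ_O`. -/
def OutC (σ : List (I × O) → I → O) : Set (ℕ → I × O) :=
  {w | ∀ n, (w n).2 = σ (wpref w n) (w n).1}

/-- Outcomes of an environment strategy `τ : (Σ_I·Σ_O)^* → Σ_I`. -/
def OutE (τ : List (I × O) → I) : Set (ℕ → I × O) :=
  {w | ∀ n, (w n).1 = τ (wpref w n)}

/-- Input projection `π_I`. -/
def inputProj (w : ℕ → I × O) : ℕ → I := fun n => (w n).1

/-- `A` is an input assumption: closed under changing output letters. -/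
def IsInputAssumption (A : Set (ℕ → I × O)) : Prop :=
  ∀ w w' : ℕ → I × O, inputProj w = inputProj w' → w ∈ A → w' ∈ A

/-- Cylinder `h·(Σ_I·Σ_O)^ω` of an even history `h`. -/
def cylE (h : List (I × O)) : Set (ℕ → I × O) := {w | wpref w h.length = h}

/-- Cylinder of a general history: an even part plus possibly a pending input letter. -/
def cylH (h : List (I × O) × Option I) : Set (ℕ → I × O) :=
  {w | wpref w h.1.length = h.1 ∧ ∀ i, h.2 = some i → (w h.1.length).1 = i}

/-- A scenario is coherent: no history is a prefix of two words of `S`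
that agree on the next input but disagree on the next output. -/
def Coherent (S : Set (ℕ → I × O)) : Prop :=
  ∀ w ∈ S, ∀ w' ∈ S, ∀ n, wpref w n = wpref w' n → (w n).1 = (w' n).1 → (w n).2 = (w' n).2

/-- The strategy `[S → σ]`: follow a word of the scenario `S` extending the current
history if one exists, and otherwise play `σ`. -/
noncomputable def shiftStrat (S : Set (ℕ → I × O))
    (σ : List (I × O) → I → O) : List (I × O) → I → O := fun h i =>
  if hex : ∃ w, w ∈ S ∧ wpref w h.length = h ∧ (w h.length).1 = i
  then (hex.choose h.length).2
  else σ h i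

/-- `EA(σ) = L ∪ ((Σ_I·Σ_O)^ω \ Out(σ))`. -/
def EA (L : Set (ℕ → I × O)) (σ : List (I × O) → I → O) : Set (ℕ → I × O) :=
  L ∪ (OutC σ)ᶜ

/-- The words doomed for `σ`: some even-length prefix extends to an outcome of `σ`,
but no outcome of `σ` extending that prefix is in `L`. -/
def Doomed (L : Set (ℕ → I × O)) (σ : List (I × O) → I → O) : Set (ℕ → I × O) :=
  {w | ∃ k, (OutC σ ∩ cylE (wpref w k)).Nonempty ∧ OutC σ ∩ cylE (wpref w k) ∩ L = ∅}

/-- `EA⁻(σ) = EA(σ) \ Doomed(σ)`. -/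
def EAminus (L : Set (ℕ → I × O)) (σ : List (I × O) → I → O) : Set (ℕ → I × O) :=
  EA L σ \ Doomed L σ

/-- `A` is sufficient for the specification `L` (for some controller strategy). -/
def Sufficient (L A : Set (ℕ → I × O)) : Prop :=
  ∃ σ : List (I × O) → I → O, OutC σ ∩ A ⊆ L

/-- `A` is output-restrictive. -/
def OutputRestrictive (A : Set (ℕ → I × O)) : Prop :=
  ∃ (h : List (I × O)) (σ : List (I × O) → I → O),
    (A ∩ cylE h).Nonempty ∧ (OutC σ ∩ cylE h).Nonempty ∧ A ∩ OutC σ ∩ cylE h = ∅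

/-- The even history of length `n` produced jointly by controller `σ` and environment `τ`. -/
def playH (σ : List (I × O) → I → O) (τ : List (I × O) → I) : ℕ → List (I × O)
  | 0 => []
  | n+1 =>
      let g := playH σ τ n
      g ++ [(τ g, σ g (τ g))]

/-- The unique joint outcome `Out(σ, τ)`. -/
def play (σ : List (I × O) → I → O) (τ : List (I × O) → I) : ℕ → I × O := fun n =>
  let g := playH σ τ n
  (τ g, σ g (τ g))

/-- History construction when the controller follows `σ` against the fixed input word `u`. -/
def playIH (σ : List (I × O) → I → O) (u : ℕ → I) : ℕ → List (I × O)
  | 0 => []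
  | n+1 =>
      let g := playIH σ u n
      g ++ [(u n, σ g (u n))]

/-- The unique outcome `Out(σ, u)` of `σ` against the input word `u`. -/
def playI (σ : List (I × O) → I → O) (u : ℕ → I) : ℕ → I × O := fun n =>
  (u n, σ (playIH σ u n) (u n))

/-- Outcomes extending the history `h` and following `σ` afterwards, `Out_h(σ)`. -/
def OutFrom (σ : List (I × O) → I → O) (h : List (I × O) × Option I) :
    Set (ℕ → I × O) :=
  {w | wpref w h.1.length = h.1 ∧ (∀ i, h.2 = some i → (w h.1.length).1 = i) ∧
       ∀ n, h.1.length ≤ n → (w n).2 = σ (wpref w n) (w n).1}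

/-- Even histories extending the finite history `b`, following `σ` and `τ`. -/
def extH (σ : List (I × O) → I → O) (τ : List (I × O) → I)
    (b : List (I × O)) : ℕ → List (I × O)
  | 0 => b
  | n+1 =>
      let g := extH σ τ b n
      g ++ [(τ g, σ g (τ g))]

/-- The unique word extending `b` and following `σ` and `τ` afterwards. -/
def extPlay (σ : List (I × O) → I → O) (τ : List (I × O) → I)
    (b : List (I × O)) : ℕ → I × O := fun n =>
  if hn : n < b.length then b.get ⟨n, hn⟩
  else
    let g := extH σ τ b (n - b.length)
    (τ g, σ g (τ g))

/-- The even history obtained from the general history `h`, letting `σ` answer a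
pending input letter if there is one. -/
def histBase (σ : List (I × O) → I → O) (h : List (I × O) × Option I) :
    List (I × O) :=
  match h.2 with
  | none => h.1
  | some i => h.1 ++ [(i, σ h.1 i)]

/-- `Out_h(σ, τ)`: the unique word extending `h`, following `σ` and `τ` afterwards. -/
def playFrom (σ : List (I × O) → I → O) (τ : List (I × O) → I)
    (h : List (I × O) × Option I) : ℕ → I × O :=
  extPlay σ τ (histBase σ h)

/-- `σ` is strongly winning for `L`. -/
def StronglyWinning (L : Set (ℕ → I × O)) (σ : List (I × O) → I → O) : Prop :=
  ∀ h : List (I × O) × Option I,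
    (∃ σ' : List (I × O) → I → O, (OutC σ' ∩ cylH h).Nonempty ∧ OutC σ' ∩ cylH h ⊆ L) →
    OutC σ ∩ cylH h ⊆ L

/-- `σ` is subgame winning for `L`. -/
def SubgameWinning (L : Set (ℕ → I × O)) (σ : List (I × O) → I → O) : Prop :=
  ∀ h : List (I × O) × Option I,
    (∃ σ' : List (I × O) → I → O, OutFrom σ' h ⊆ L) → OutFrom σ h ⊆ L

lemma wpref_length (w : ℕ → I × O) (n : ℕ) : (wpref w n).length = n := by
  simp [wpref]

lemma wpref_succ (w : ℕ → I × O) (n : ℕ) :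
    wpref w (n + 1) = wpref w n ++ [w n] := by
  simp [wpref, List.range_succ]

lemma playIH_eq_wpref (σ : List (I × O) → I → O) (u : ℕ → I) (n : ℕ) :
    playIH σ u n = wpref (playI σ u) n := by
  induction n with
  | zero => simp [playIH, wpref]
  | succ n ih =>
      rw [wpref_succ]
      show playIH σ u n ++ [(u n, σ (playIH σ u n) (u n))] = _
      rw [ih]
      show _ = wpref (playI σ u) n ++ [(u n, σ (playIH σ u n) (u n))]
      rw [ih]

lemma playI_mem_OutC (σ : List (I × O) → I → O) (u : ℕ → I) :
    playI σ u ∈ OutC σ := by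
  intro n
  show σ (playIH σ u n) (u n) = σ (wpref (playI σ u) n) (u n)
  rw [playIH_eq_wpref]

/-- if `σ` is strongly winning for `L`, then `EA(σ)` is an optimal
assumption for `L`. -/
theorem stronglyWinning_EA_optimal
    (L : Set (ℕ → I × O)) (σ : List (I × O) → I → O)
    (hsw : StronglyWinning L σ) :
    Sufficient L (EA L σ) ∧
    ∀ B : Set (ℕ → I × O), Sufficient L B → ¬ EA L σ ⊂ B := by
  constructor
  · exact ⟨σ, fun w hw => hw.2.elim id (fun h => absurd hw.1 h)⟩
  · rintro B ⟨σ', hB⟩ hsub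
    obtain ⟨hEAB, hne⟩ := hsub
    obtain ⟨w, hwB, hwEA⟩ := Set.not_subset.mp hne
    have hwL : w ∉ L := fun h => hwEA (Or.inl h)
    have hwO : w ∈ OutC σ := by
      by_contra h; exact hwEA (Or.inr h)
    have hw' : w ∉ OutC σ' := fun h => hwL (hB ⟨h, hwB⟩)
    have hex : ∃ n, ¬ (w n).2 = σ' (wpref w n) (w n).1 := by
      by_contra h; push_neg at h; exact hw' h
    set n := Nat.find hex with hn
    have hne' : ¬ (w n).2 = σ' (wpref w n) (w n).1 := Nat.find_spec hex
    have hmin : ∀ m < n, (w m).2 = σ' (wpref w m) (w m).1 := by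
      intro m hm
      by_contra h
      exact absurd hm (not_lt.mpr (Nat.find_le h))
    set h : List (I × O) × Option I := (wpref w n, some (w n).1) with hh
    have hlen : h.1.length = n := wpref_length w n
    set u : ℕ → I := fun m => (w m).1 with hu
    set v : ℕ → I × O := playI σ' u with hv
    have hvpref : ∀ m, m ≤ n → wpref v m = wpref w m := by
      intro m hm
      induction m with
      | zero => rfl
      | succ m ih =>
          have hmn : m < n := hm
          rw [wpref_succ, wpref_succ, ih (le_of_lt hmn)]
          congr 1
          have : v m = (u m, σ' (wpref v m) (u m)) := by
            show (u m, σ' (playIH σ' u m) (u m)) = _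
            rw [playIH_eq_wpref]
          rw [this, ih (le_of_lt hmn)]
          show [((w m).1, σ' (wpref w m) (w m).1)] = [w m]
          rw [← hmin m hmn]
    have hvC : v ∈ OutC σ' ∩ cylH h := by
      refine ⟨playI_mem_OutC σ' u, ?_, ?_⟩
      · rw [hlen]; exact hvpref n le_rfl
      · intro i hi
        rw [hlen]
        injection hi with hi
    -- subset part of the premise of strong winning
    have hsubL : OutC σ' ∩ cylH h ⊆ L := by
      rintro x ⟨hxO', hx1, hx2⟩
      rw [hlen] at hx1 hx2
      have hxi : (x n).1 = (w n).1 := hx2 _ rfl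
      by_cases hxO : x ∈ OutC σ
      · exfalso
        have e1 : (x n).2 = σ (wpref w n) (w n).1 := by
          have := hxO n; rwa [hx1, hxi] at this
        have e2 : (x n).2 = σ' (wpref w n) (w n).1 := by
          have := hxO' n; rwa [hx1, hxi] at this
        have := hwO n
        rw [← this] at e1
        exact hne' (by rw [← e1, e2])
      · exact hB ⟨hxO', hEAB (Or.inr hxO)⟩
    have := hsw h ⟨σ', ⟨v, hvC⟩, hsubL⟩
    refine hwL (this ⟨hwO, ?_, ?_⟩)
    · rw [hlen]
    · intro i hi
      rw [hlen]
      injection hi with hi
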